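/- arXiv:math/9411206 — 6 statements merged into one kernel-verified Lean document; each statement's English description precedes it below -/
import Mathlib

section
/- If F : ℝ² → ℝ is such that F(·, y) is of Baire class 1 for every y ∈ ℝ, and the family {F(x, ·) : x ∈ ℝ} is uniformly equicontinuous (e.g., uniformly Lipschitz with a common constant), then F is of Baire class 1 as a function of two variables. -/
open MeasureTheory Filter Set Topology
/-- Baire class `n` functions: class 0 = continuous, class `n+1` = pointwise
limits of sequences of class-`n` functions. -/
def BaireClass {X Y : Type*} [TopologicalSpace X] [TopologicalSpace Y] :
    ℕ → (X → Y) → Prop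
  | 0, f => Continuous f
  | (n + 1), f => ∃ g : ℕ → X → Y, (∀ k, BaireClass n (g k)) ∧
      ∀ x, Filter.Tendsto (fun k => g k x) Filter.atTop (nhds (f x))

/-!
Interpolating linearly in `y` between the sections `F(·, j/(n+1))`, `j ∈ ℤ`, gives functions
`Gₙ` that are Baire class 1 (each is a pointwise limit of the interpolants of continuous
approximations of the sections) and that converge to `F` uniformly, by the uniform
equicontinuity in `y`. Baire class 1 real functions are closed under uniform limits: once
`|Gₙ - F| ≤ 2⁻ⁿ`, write `F = G₀ + ∑ (Gₙ₊₁ - Gₙ)` and approximate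
the `n`-th term by continuous functions clipped to its bound, so that Tannery's theorem applies
to the partial sums of the approximations.
-/

namespace BaireClass

variable {X Y : Type*} [TopologicalSpace X] [TopologicalSpace Y]

theorem one_comp_continuous {Z : Type*} [TopologicalSpace Z] {f : X → Y} {φ : Z → X}
    (hf : BaireClass 1 f) (hφ : Continuous φ) : BaireClass 1 (f ∘ φ) := by
  obtain ⟨g, hg, hlim⟩ := hf
  exact ⟨fun k => g k ∘ φ, fun k => (hg k).comp hφ, fun z => hlim (φ z)⟩

theorem one_add [Add Y] [ContinuousAdd Y] {f g : X → Y} (hf : BaireClass 1 f)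
    (hg : BaireClass 1 g) : BaireClass 1 (f + g) := by
  obtain ⟨u, hu, hulim⟩ := hf
  obtain ⟨v, hv, hvlim⟩ := hg
  exact ⟨fun k => u k + v k, fun k => (hu k).add (hv k), fun x => (hulim x).add (hvlim x)⟩

theorem one_sub [Sub Y] [ContinuousSub Y] {f g : X → Y} (hf : BaireClass 1 f)
    (hg : BaireClass 1 g) : BaireClass 1 (f - g) := by
  obtain ⟨u, hu, hulim⟩ := hf
  obtain ⟨v, hv, hvlim⟩ := hg
  exact ⟨fun k => u k - v k, fun k => (hu k).sub (hv k), fun x => (hulim x).sub (hvlim x)⟩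

theorem exists_approx_abs_le {f : X → ℝ} {b : ℝ} (hf : BaireClass 1 f)
    (hfb : ∀ x, |f x| ≤ b) :
    ∃ g : ℕ → X → ℝ, (∀ k, Continuous (g k)) ∧ (∀ k x, |g k x| ≤ b) ∧
      ∀ x, Tendsto (g · x) atTop (𝓝 (f x)) := by
  obtain ⟨g, hg, hlim⟩ := hf
  refine ⟨fun k x => max (-b) (min b (g k x)), fun k => ?_, fun k x => ?_, fun x => ?_⟩
  · exact continuous_const.max (continuous_const.min (hg k))
  · exact abs_le.2 ⟨le_max_left _ _, max_le (by linarith [(abs_nonneg _).trans (hfb x)])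
      (min_le_left _ _)⟩
  · obtain ⟨hlo, hhi⟩ := abs_le.1 (hfb x)
    have hclip := (tendsto_const_nhds (x := -b)).max ((tendsto_const_nhds (x := b)).min (hlim x))
    rwa [min_eq_right hhi, max_eq_right hlo] at hclip

theorem one_of_hasSum {q : ℕ → X → ℝ} {b : ℕ → ℝ} {F : X → ℝ}
    (hq : ∀ n, BaireClass 1 (q n)) (hqb : ∀ n x, |q n x| ≤ b n) (hb : Summable b)
    (hF : ∀ x, HasSum (q · x) (F x)) : BaireClass 1 F := by
  choose c hc hcb hclim using fun n => (hq n).exists_approx_abs_le (hqb n)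
  refine ⟨fun m x => ∑ n ∈ Finset.range m, c n m x,
    fun m => continuous_finsetSum _ fun n _ => hc n m, fun x => ?_⟩
  have hpartial : ∀ m, ∑ n ∈ Finset.range m, c n m x = ∑' n, if n < m then c n m x else 0 := by
    intro m
    rw [tsum_eq_sum (s := Finset.range m) fun n hn => if_neg (by simpa using hn)]
    exact Finset.sum_congr rfl fun n hn => (if_pos (Finset.mem_range.1 hn)).symm
  simp_rw [hpartial, ← (hF x).tsum_eq]
  refine tendsto_tsum_of_dominated_convergence hb (fun n => ?_) (.of_forall fun m n => ?_)
  · exact (hclim n x).congr' ((eventually_gt_atTop n).mono fun m hm => (if_pos hm).symm)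
  · split_ifs
    · exact hcb n m x
    · simpa using (abs_nonneg _).trans (hqb n x)

theorem one_of_tendstoUniformly {G : ℕ → X → ℝ} {F : X → ℝ} (hG : ∀ n, BaireClass 1 (G n))
    (hGF : TendstoUniformly G F atTop) : BaireClass 1 F := by
  choose N hN using fun n : ℕ =>
    (Metric.tendstoUniformly_iff.1 hGF _ (pow_pos one_half_pos n)).exists
  set q : ℕ → X → ℝ := fun n => G (N (n + 1)) - G (N n)
  have hqb : ∀ n x, |q n x| ≤ 2 * (1 / 2) ^ n := by
    intro n x
    calc |q n x| = dist (G (N (n + 1)) x) (G (N n) x) := (Real.dist_eq _ _).symm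
      _ ≤ dist (F x) (G (N (n + 1)) x) + dist (F x) (G (N n) x) := dist_triangle_left _ _ _
      _ ≤ (1 / 2) ^ (n + 1) + (1 / 2) ^ n := add_le_add (hN _ x).le (hN n x).le
      _ ≤ 2 * (1 / 2) ^ n := by rw [pow_succ]; linarith [pow_nonneg (one_half_pos (α := ℝ)).le n]
  have hGN : ∀ x, Tendsto (fun n => G (N n) x) atTop (𝓝 (F x)) := fun x =>
    tendsto_iff_dist_tendsto_zero.2 <| squeeze_zero (fun _ => dist_nonneg)
      (fun n => (dist_comm (F x) _ ▸ hN n x).le)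
      (tendsto_pow_atTop_nhds_zero_of_lt_one one_half_pos.le one_half_lt_one)
  have hsum : ∀ x, HasSum (q · x) (F x - G (N 0) x) := by
    intro x
    have hsummable : Summable (q · x) :=
      (summable_geometric_two.mul_left 2).of_norm_bounded fun n => hqb n x
    rw [hsummable.hasSum_iff_tendsto_nat]
    simpa [q, Finset.sum_range_sub fun n => G (N n) x] using (hGN x).sub_const (G (N 0) x)
  have hF := (hG (N 0)).one_add <| one_of_hasSum (fun n => (hG _).one_sub (hG _)) hqb
    (summable_geometric_two.mul_left 2) hsum
  rwa [show G (N 0) + (fun x => F x - G (N 0) x) = F from funext fun x => add_sub_cancel _ _]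
    at hF

end BaireClass

section GridInterpolation

variable {X : Type*}

noncomputable def gridInterp (g : ℤ → X → ℝ) (p : X × ℝ) : ℝ :=
  (1 - Int.fract p.2) * g ⌊p.2⌋ p.1 + Int.fract p.2 * g (⌊p.2⌋ + 1) p.1

theorem gridInterp_eq_of_mem_Icc (g : ℤ → X → ℝ) {j : ℤ} {p : X × ℝ}
    (hp : p.2 ∈ Icc (j : ℝ) (j + 1)) :
    gridInterp g p = (1 - (p.2 - j)) * g j p.1 + (p.2 - j) * g (j + 1) p.1 := by
  rcases hp.2.lt_or_eq with hlt | heq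
  · have hfloor : ⌊p.2⌋ = j := Int.floor_eq_iff.2 ⟨hp.1, hlt⟩
    simp only [gridInterp, Int.fract, hfloor]
  · have hfloor : ⌊p.2⌋ = j + 1 := by rw [heq]; exact_mod_cast Int.floor_intCast (j + 1)
    simp only [gridInterp, Int.fract, hfloor]
    rw [heq]
    push_cast
    ring

theorem gridInterp_mem_segment (g : ℤ → X → ℝ) (p : X × ℝ) :
    gridInterp g p ∈ segment ℝ (g ⌊p.2⌋ p.1) (g (⌊p.2⌋ + 1) p.1) :=
  ⟨1 - Int.fract p.2, Int.fract p.2, sub_nonneg.2 (Int.fract_lt_one _).le,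
    Int.fract_nonneg _, sub_add_cancel _ _, rfl⟩

variable [TopologicalSpace X]

theorem continuous_gridInterp {g : ℤ → X → ℝ} (hg : ∀ j, Continuous (g j)) :
    Continuous (gridInterp g) := by
  have hlf : LocallyFinite fun j : ℤ => Prod.snd ⁻¹' Icc (j : ℝ) (j + 1) :=
    (locallyFinite_Icc_of_tendsto tendsto_intCast_atTop_atTop
      (tendsto_atBot_add_const_right _ 1
        (Int.cast_mono.tendsto_atBot_atBot fun b => ⟨⌊b⌋, Int.floor_le b⟩))).preimage_continuous
      (continuous_snd (X := X) (Y := ℝ))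
  refine hlf.continuous ?_ (fun j => isClosed_Icc.preimage continuous_snd) fun j => ?_
  · refine eq_univ_of_forall fun p => mem_iUnion.2 ⟨⌊p.2⌋, Int.floor_le _, ?_⟩
    exact (Int.lt_floor_add_one _).le
  · refine ContinuousOn.congr (Continuous.continuousOn (by fun_prop)) fun p hp =>
      gridInterp_eq_of_mem_Icc g hp

theorem BaireClass.one_gridInterp {g : ℤ → X → ℝ} (hg : ∀ j, BaireClass 1 (g j)) :
    BaireClass 1 (gridInterp g) := by
  choose h hcont hlim using hg
  refine ⟨fun m => gridInterp (h · m), fun m => continuous_gridInterp fun j => hcont j m,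
    fun p => ?_⟩
  exact ((hlim _ p.1).const_mul _).add ((hlim _ p.1).const_mul _)

noncomputable def gridApprox (F : X × ℝ → ℝ) (n : ℕ) (p : X × ℝ) : ℝ :=
  gridInterp (fun j x => F (x, j / (n + 1))) (p.1, (n + 1) * p.2)

theorem BaireClass.one_gridApprox {F : X × ℝ → ℝ} (hF : ∀ y, BaireClass 1 fun x => F (x, y))
    (n : ℕ) : BaireClass 1 (gridApprox F n) :=
  (BaireClass.one_gridInterp fun _ => hF _).one_comp_continuous (by fun_prop)

end GridInterpolation

theorem dist_intCast_div_le {c t : ℝ} (hc : 0 < c) {k : ℤ} (hk : |(k : ℝ) - c * t| ≤ 1) :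
    dist ((k : ℝ) / c) t ≤ 1 / c := by
  rw [Real.dist_eq, show (k : ℝ) / c - t = (k - c * t) / c by field_simp, abs_div,
    abs_of_pos hc]
  exact div_le_div_of_nonneg_right hk hc.le

theorem tendstoUniformly_gridApprox {X : Type*} {F : X × ℝ → ℝ}
    (hF : UniformEquicontinuous fun x y => F (x, y)) :
    TendstoUniformly (gridApprox F) F atTop := by
  rw [Metric.tendstoUniformly_iff]
  intro ε hε
  obtain ⟨δ, hδ, hFδ⟩ := Metric.uniformEquicontinuous_iff.1 hF (ε / 2) (half_pos hε)
  filter_upwards [tendsto_one_div_add_atTop_nhds_zero_nat.eventually (gt_mem_nhds hδ)]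
    with n hn
  rintro ⟨x, y⟩
  have hpos : (0 : ℝ) < n + 1 := n.cast_add_one_pos
  have hgrid : ∀ k : ℤ, |(k : ℝ) - (n + 1) * y| ≤ 1 →
      F (x, k / (n + 1)) ∈ Metric.closedBall (F (x, y)) (ε / 2) := fun k hk =>
    (hFδ _ _ ((dist_intCast_div_le hpos hk).trans_lt hn) x).le
  set t := (n + 1) * y
  have hlo : |(⌊t⌋ : ℝ) - t| ≤ 1 := by
    rw [abs_sub_comm, abs_of_nonneg (sub_nonneg.2 (Int.floor_le t))]
    linarith [Int.lt_floor_add_one t]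
  have hhi : |((⌊t⌋ + 1 : ℤ) : ℝ) - t| ≤ 1 := by
    push_cast
    rw [abs_of_nonneg (by linarith [Int.lt_floor_add_one t])]
    linarith [Int.floor_le t]
  have hmem := (convex_closedBall _ _).segment_subset (hgrid _ hlo) (hgrid _ hhi)
    (gridInterp_mem_segment (fun j x => F (x, j / (n + 1))) (x, t))
  rw [dist_comm]
  exact (Metric.mem_closedBall.1 hmem).trans_lt (half_lt_self hε)

/-- If every horizontal section of `F` is Baire class 1 and the family of
vertical sections is uniformly equicontinuous, then `F` is Baire class 1. -/
theorem baireOne_of_sections (F : ℝ × ℝ → ℝ)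
    (h1 : ∀ y : ℝ, BaireClass 1 (fun x => F (x, y)))
    (h2 : UniformEquicontinuous (fun x y => F (x, y))) :
    BaireClass 1 F :=
  BaireClass.one_of_tendstoUniformly (BaireClass.one_gridApprox h1)
    (tendstoUniformly_gridApprox h2)
end

section
/- Let (X, Σ, μ) be a probability space in which every subset of X is measurable, let α < ω₁, and let f : X × ℝ → ℝ be bounded such that for every x ∈ X the function y ↦ f(x,y) is of Baire class α. Then the function F(y) = ∫ₓ f(x,y) dμ(x) is of Baire class α. -/
open MeasureTheory Filter Set Topology

/-!
Induct on `α`. For `α = 0` the integral is continuous by dominated convergence. Otherwise write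
each section as a pointwise limit `f x = lim gₙ x` with `gₙ x` of class `βₙ(x) < α`, truncated
to stay bounded by `M`. The ordinals `βₙ(x)` are not uniformly below `α`, but since `α` is
countable they lie below some term of a cofinal sequence `δₖ < α`, so for each `n` the sets
`{x | gₙ x has class δₖ}` exhaust `X` and one can choose `kₙ` so that their complement has measure
at most `1/n`. Replacing `gₙ x` by `0` off that set changes `∫ gₙ x` by at most `M/n` and makes all
sections of class `δ_{kₙ} < α`, so the induction hypothesis applies; dominated convergence then
identifies the limit as `∫ f x`.
-/

/-- Baire class `α` for an ordinal `α`: class `0` is the continuous functions,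
and a function is of class `α` if it is the pointwise limit of a sequence of
functions of classes `βₙ < α`. -/
inductive BaireClassOrd {X : Type} [TopologicalSpace X] :
    Ordinal.{0} → (X → ℝ) → Prop
  | zero (f : X → ℝ) : Continuous f → BaireClassOrd 0 f
  | lim (α : Ordinal.{0}) (f : X → ℝ) (β : ℕ → Ordinal.{0}) (g : ℕ → X → ℝ) :
      (∀ n, β n < α) → (∀ n, BaireClassOrd (β n) (g n)) →
      (∀ x, Tendsto (fun n => g n x) atTop (nhds (f x))) → BaireClassOrd α f

namespace BaireClassOrd

variable {X : Type} [TopologicalSpace X] {α β : Ordinal.{0}} {f : X → ℝ}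

theorem mono (h : BaireClassOrd β f) (hle : β ≤ α) : BaireClassOrd α f := by
  rcases hle.eq_or_lt with rfl | hlt
  · exact h
  · exact .lim α f (fun _ => β) (fun _ => f) (fun _ => hlt) (fun _ => h)
      (fun _ => tendsto_const_nhds)

theorem const (α : Ordinal.{0}) (c : ℝ) : BaireClassOrd α (fun _ : X => c) :=
  (BaireClassOrd.zero _ continuous_const).mono zero_le

theorem continuous (h : BaireClassOrd 0 f) : Continuous f := by
  cases h with
  | zero _ hf => exact hf
  | lim _ _ β _ hβ => exact absurd (hβ 0) not_lt_zero

theorem continuous_comp {φ : ℝ → ℝ} (hφ : Continuous φ) (h : BaireClassOrd α f) :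
    BaireClassOrd α (φ ∘ f) := by
  induction h with
  | zero f hf => exact .zero _ (hφ.comp hf)
  | lim α f β g hβ _ hlim ih =>
    exact .lim α _ β (fun n => φ ∘ g n) hβ ih fun x => (hφ.tendsto _).comp (hlim x)

theorem exists_bounded_approx (h : BaireClassOrd α f) (hα : α ≠ 0) {M : ℝ}
    (hbd : ∀ y, |f y| ≤ M) :
    ∃ (β : ℕ → Ordinal.{0}) (g : ℕ → X → ℝ), (∀ n, β n < α) ∧
      (∀ n, BaireClassOrd (β n) (g n)) ∧ (∀ n y, |g n y| ≤ M) ∧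
      ∀ y, Tendsto (fun n => g n y) atTop (𝓝 (f y)) := by
  obtain _ | ⟨_, _, β, g, hβ, hg, hlim⟩ := h
  · exact absurd rfl hα
  set T : ℝ → ℝ := fun t => max (-M) (min M t)
  have hT : Continuous T := continuous_const.max (continuous_const.min continuous_id)
  have hT_fix : ∀ y, T (f y) = f y := fun y => by
    obtain ⟨h₁, h₂⟩ := abs_le.mp (hbd y)
    simp only [T, min_eq_right h₂, max_eq_right h₁]
  refine ⟨β, fun n => T ∘ g n, hβ, fun n => (hg n).continuous_comp hT, fun n y => ?_, fun y => ?_⟩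
  · have hM : 0 ≤ M := (abs_nonneg _).trans (hbd y)
    exact abs_le.mpr ⟨le_max_left _ _, max_le (by linarith) (min_le_left _ _)⟩
  · rw [← hT_fix y]
    exact (hT.tendsto (f y)).comp (hlim y)

end BaireClassOrd

theorem Ordinal.exists_monotone_cofinal_seq {α : Ordinal}
    (hα : α < (Cardinal.aleph 1).ord) (hα0 : α ≠ 0) :
    ∃ δ : ℕ → Ordinal, Monotone δ ∧ (∀ k, δ k < α) ∧ ∀ β < α, ∃ k, β ≤ δ k := by
  have : Countable (Iio α) := by
    rw [← Cardinal.mk_le_aleph0_iff, Cardinal.mk_Iio_ordinal, Cardinal.lift_le_aleph0,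
      ← Order.lt_succ_iff, Cardinal.succ_aleph0, ← Cardinal.lt_ord]
    exact hα
  have : Nonempty (Iio α) := ⟨⟨0, pos_iff_ne_zero.mpr hα0⟩⟩
  obtain ⟨γ, hγ⟩ := exists_surjective_nat (Iio α)
  refine ⟨partialSups (fun n => (γ n : Ordinal)), (partialSups _).monotone,
    fun k => (partialSups_iff_forall (· < α) sup_lt_iff).2 fun j _ => (γ j).2, fun β hβ => ?_⟩
  obtain ⟨k, hk⟩ := hγ ⟨β, hβ⟩
  exact ⟨k, (congrArg Subtype.val hk).ge.trans (le_partialSups (fun n => (γ n : Ordinal)) k)⟩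

section Integral

variable {X : Type*} [MeasurableSpace X] {μ : Measure X} [IsFiniteMeasure μ]

theorem exists_tendsto_measure_compl_zero {B : ℕ → ℕ → Set X}
    (hB : ∀ n k, MeasurableSet (B n k)) (hmono : ∀ n, Monotone (B n))
    (hcover : ∀ n, ⋃ k, B n k = univ) :
    ∃ k : ℕ → ℕ, Tendsto (fun n => μ (B n (k n))ᶜ) atTop (𝓝 0) := by
  have hlim (n : ℕ) : Tendsto (fun k => μ (B n k)ᶜ) atTop (𝓝 0) := by
    have := tendsto_measure_iInter_atTop (μ := μ) (fun k => (hB n k).compl.nullMeasurableSet)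
      (fun _ _ hkl => compl_subset_compl.mpr (hmono n hkl)) ⟨0, measure_ne_top μ _⟩
    rwa [← compl_iUnion, hcover n, compl_univ, measure_empty] at this
  have hsmall (n : ℕ) : ∃ k, μ (B n k)ᶜ ≤ (n : ENNReal)⁻¹ :=
    ((hlim n).eventually_le_const (ENNReal.inv_pos.mpr (ENNReal.natCast_ne_top n))).exists
  choose k hk using hsmall
  exact ⟨k, tendsto_of_tendsto_of_tendsto_of_le_of_le tendsto_const_nhds
    ENNReal.tendsto_inv_nat_nhds_zero (fun _ => zero_le) hk⟩

variable {E : Type*} [NormedAddCommGroup E] [NormedSpace ℝ E] {M : ℝ}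

theorem norm_integral_indicator_sub_integral_le {s : Set X} {u : X → E}
    (hs : MeasurableSet s) (hu : Integrable u μ) (hbd : ∀ x, ‖u x‖ ≤ M) :
    ‖∫ x, s.indicator u x ∂μ - ∫ x, u x ∂μ‖ ≤ M * μ.real sᶜ := by
  rw [integral_indicator hs, ← integral_add_compl hs hu, sub_add_cancel_left, norm_neg]
  exact norm_setIntegral_le_of_norm_le_const (measure_lt_top μ _) fun x _ => hbd x

theorem tendsto_integral_indicator_of_tendsto {u : ℕ → X → E} {v : X → E} {s : ℕ → Set X}
    (hu : ∀ n, AEStronglyMeasurable (u n) μ) (hs : ∀ n, MeasurableSet (s n))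
    (hbd : ∀ n x, ‖u n x‖ ≤ M) (hlim : ∀ᵐ x ∂μ, Tendsto (fun n => u n x) atTop (𝓝 (v x)))
    (hs_compl : Tendsto (fun n => μ (s n)ᶜ) atTop (𝓝 0)) :
    Tendsto (fun n => ∫ x, (s n).indicator (u n) x ∂μ) atTop (𝓝 (∫ x, v x ∂μ)) := by
  have hdct : Tendsto (fun n => ∫ x, u n x ∂μ) atTop (𝓝 (∫ x, v x ∂μ)) :=
    tendsto_integral_of_dominated_convergence (fun _ => M) hu (integrable_const M)
      (fun n => ae_of_all _ (hbd n)) hlim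
  have herr : Tendsto (fun n => M * μ.real (s n)ᶜ) atTop (𝓝 0) := by
    simpa [Measure.real] using
      ((ENNReal.tendsto_toReal ENNReal.zero_ne_top).comp hs_compl).const_mul M
  refine hdct.congr_dist (squeeze_zero (fun _ => dist_nonneg) (fun n => ?_) herr)
  rw [dist_comm, dist_eq_norm]
  exact norm_integral_indicator_sub_integral_le (hs n)
    (.of_bound (hu n) M (ae_of_all _ (hbd n))) (hbd n)

end Integral

theorem BaireClassOrd.integral {X Y : Type} [MeasurableSpace X] [TopologicalSpace Y]
    [FirstCountableTopology Y] (hall : ∀ s : Set X, MeasurableSet s) (μ : Measure X)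
    [IsFiniteMeasure μ] {α : Ordinal.{0}} (hα : α < (Cardinal.aleph 1).ord) {f : X → Y → ℝ}
    {M : ℝ} (hbd : ∀ x y, |f x y| ≤ M) (hf : ∀ x, BaireClassOrd α (f x)) :
    BaireClassOrd α (fun y => ∫ x, f x y ∂μ) := by
  induction α using WellFoundedLT.induction generalizing f with | ind α IH
  have hmeas (u : X → ℝ) : AEStronglyMeasurable u μ :=
    (show Measurable u from fun s _ => hall _).aestronglyMeasurable
  rcases eq_or_ne α 0 with rfl | hα0
  · exact .zero _ <| continuous_of_dominated (fun _ => hmeas _)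
      (fun y => ae_of_all _ fun x => (hbd x y).trans_eq' (Real.norm_eq_abs _))
      (integrable_const M) (ae_of_all _ fun x => (hf x).continuous)
  choose β g hβ hg hg_bd hg_lim using fun x => (hf x).exists_bounded_approx hα0 (hbd x)
  obtain ⟨δ, hδ_mono, hδ_lt, hδ_cofinal⟩ := Ordinal.exists_monotone_cofinal_seq hα hα0
  set B : ℕ → ℕ → Set X := fun n k => {x | BaireClassOrd (δ k) (g x n)}
  obtain ⟨k, hk⟩ := exists_tendsto_measure_compl_zero (μ := μ) (B := B) (fun _ _ => hall _)
    (fun n _ _ hkl _ hx => BaireClassOrd.mono hx (hδ_mono hkl))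
    (fun n => eq_univ_of_forall fun x => mem_iUnion.mpr <|
      (hδ_cofinal _ (hβ x n)).imp fun _ hle => (hg x n).mono hle)
  have hclass (n : ℕ) (x : X) :
      BaireClassOrd (δ (k n)) (fun y => (B n (k n)).indicator (fun x => g x n y) x) := by
    by_cases hx : x ∈ B n (k n)
    · simp only [indicator_of_mem hx]
      exact hx
    · simpa only [indicator_of_notMem hx] using BaireClassOrd.const _ 0
  refine .lim α _ (fun n => δ (k n)) _ (fun n => hδ_lt _)
    (fun n => IH _ (hδ_lt (k n)) ((hδ_lt _).trans hα)
      (fun x y => le_trans (by simpa only [Real.norm_eq_abs] using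
        norm_indicator_le_norm_self (fun x => g x n y) x) (hg_bd x n y)) (hclass n))
    (fun y => tendsto_integral_indicator_of_tendsto (fun _ => hmeas _) (fun _ => hall _)
      (fun n x => (hg_bd x n y).trans_eq' (Real.norm_eq_abs _))
      (ae_of_all _ fun x => hg_lim x y) hk)

/-- If `μ` is a probability measure on a space where all sets are measurable,
`f` is bounded and each section `f x` is of Baire class `α < ω₁`, then
`y ↦ ∫ f(x,y) dμ(x)` is of Baire class `α`. -/
theorem baireClassOrd_integral {X : Type} [MeasurableSpace X]
    (hall : ∀ s : Set X, MeasurableSet s)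
    (μ : Measure X) [IsProbabilityMeasure μ]
    (α : Ordinal.{0}) (hα : α < (Cardinal.aleph 1).ord)
    (f : X → ℝ → ℝ) (M : ℝ) (hbd : ∀ x y, |f x y| ≤ M)
    (hf : ∀ x, BaireClassOrd α (f x)) :
    BaireClassOrd α (fun y => ∫ x, f x y ∂μ) :=
  BaireClassOrd.integral hall μ hα hbd hf
end

section
/- If f : ℝ → ℝ has countable range and the preimage of every singleton is a G_δ set, then f is of Baire class 2. -/
/-!
Enumerate the range of `f` as `c₀, c₁, …` and write `f⁻¹{cₖ} = ⋂ⱼ Uₖⱼ` with `Uₖⱼ` open. The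
`m`-th approximant sends `x` to `cₖ` for the least `k ≤ m` with `x ∈ Uₖ₀ ∩ ⋯ ∩ Uₖₘ`. It is glued
from constants along open sets, hence of Baire class 1, since the indicator of an open set is a
pointwise limit of continuous functions. If `f x = cₙ`, then for `m` large every earlier level
set `f⁻¹{cₖ}`, `k < n`, has already excluded `x` at some stage `j ≤ m`, so the approximants are
eventually equal to `f x`.
-/

open MeasureTheory Filter Set Topology
theorem IsClosed.exists_continuous_tendsto_indicator {X : Type*} [PseudoEMetricSpace X]
    {F : Set X} (hF : IsClosed F) :
    ∃ φ : ℕ → X → ℝ, (∀ j, Continuous (φ j)) ∧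
      ∀ x, Tendsto (fun j => φ j x) atTop (𝓝 (F.indicator 1 x)) := by
  have hδ : ∀ j : ℕ, (0 : ℝ) < 1 / (j + 1) := fun j => Nat.one_div_pos_of_nat
  have hlim := thickenedIndicator_tendsto_indicator_closure hδ
    tendsto_one_div_add_atTop_nhds_zero_nat F
  refine ⟨fun j x => thickenedIndicator (hδ j) F x, fun j => ?_, fun x => ?_⟩
  · exact NNReal.continuous_coe.comp (thickenedIndicator (hδ j) F).continuous
  · have hlim_x := NNReal.tendsto_coe.2 (tendsto_pi_nhds.1 hlim x)
    rw [hF.closure_eq] at hlim_x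
    convert hlim_x using 2
    by_cases hx : x ∈ F <;> simp [hx]

theorem Continuous.baireClass_one {X Y : Type*} [TopologicalSpace X] [TopologicalSpace Y]
    {f : X → Y} (hf : Continuous f) : BaireClass 1 f :=
  ⟨fun _ => f, fun _ => hf, fun _ => tendsto_const_nhds⟩

theorem IsOpen.baireClass_one_piecewise {X E : Type*} [PseudoEMetricSpace X]
    [NormedAddCommGroup E] [NormedSpace ℝ E] {V : Set X} (hV : IsOpen V)
    [∀ x, Decidable (x ∈ V)] {f g : X → E} (hf : BaireClass 1 f) (hg : BaireClass 1 g) :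
    BaireClass 1 (V.piecewise f g) := by
  obtain ⟨φ, hφc, hφlim⟩ := hV.isClosed_compl.exists_continuous_tendsto_indicator
  obtain ⟨f', hf'c, hf'lim⟩ := hf
  obtain ⟨g', hg'c, hg'lim⟩ := hg
  refine ⟨fun j x => (1 - φ j x) • f' j x + φ j x • g' j x,
    fun j => ((continuous_const.sub (hφc j)).smul (hf'c j)).add ((hφc j).smul (hg'c j)),
    fun x => ?_⟩
  have hlim := (((tendsto_const_nhds (x := (1 : ℝ))).sub (hφlim x)).smul (hf'lim x)).add
    ((hφlim x).smul (hg'lim x))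
  by_cases hx : x ∈ V <;> simpa [hx] using hlim

/-- `firstHit W a d n x` is `a k` for the least `k < n` with `x ∈ W k`, and `d` if there is none. -/
noncomputable def firstHit {X E : Type*} (W : ℕ → Set X) (a : ℕ → E) (d : E) : ℕ → X → E
  | 0 => fun _ => d
  | n + 1 => open Classical in
      (⋃ k < n, W k).piecewise (firstHit W a d n) ((W n).piecewise (fun _ => a n) fun _ => d)

theorem baireClass_one_firstHit {X E : Type*} [PseudoEMetricSpace X]
    [NormedAddCommGroup E] [NormedSpace ℝ E] {W : ℕ → Set X} (hW : ∀ k, IsOpen (W k))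
    (a : ℕ → E) (d : E) (n : ℕ) : BaireClass 1 (firstHit W a d n) := by
  classical
  induction n with
  | zero => exact continuous_const.baireClass_one
  | succ n ih =>
    exact (isOpen_biUnion fun k _ => hW k).baireClass_one_piecewise ih
      ((hW n).baireClass_one_piecewise continuous_const.baireClass_one
        continuous_const.baireClass_one)

theorem firstHit_eq {X E : Type*} {W : ℕ → Set X} (a : ℕ → E) (d : E) {n N : ℕ} {x : X}
    (hn : x ∈ W n) (hlt : ∀ k < n, x ∉ W k) (hN : n < N) : firstHit W a d N x = a n := by
  induction N, hN using Nat.le_induction with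
  | base =>
    have hx : x ∉ ⋃ k < n, W k := by simpa using hlt
    simp [firstHit, hx, hn]
  | succ N hnN ih =>
    have hx : x ∈ ⋃ k < N, W k := mem_biUnion hnN hn
    simp [firstHit, hx, ih]

theorem eventually_notMem_biInter_le {X : Type*} {U : ℕ → Set X} {x : X}
    (hx : x ∉ ⋂ j, U j) : ∀ᶠ m in atTop, x ∉ ⋂ j ≤ m, U j := by
  obtain ⟨j, hj⟩ : ∃ j, x ∉ U j := by simpa using hx
  filter_upwards [eventually_ge_atTop j] with m hm
  exact fun h => hj (mem_iInter₂.1 h j hm)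

/-- A real function with countable range whose point preimages are all `Gδ`
sets is of Baire class 2. -/
theorem baireTwo_of_countable_range_gdelta (f : ℝ → ℝ)
    (hr : (Set.range f).Countable)
    (hG : ∀ c : ℝ, IsGδ (f ⁻¹' {c})) :
    BaireClass 2 f := by
  obtain ⟨c, hc⟩ := hr.exists_eq_range (range_nonempty f)
  choose U hUo hUe using fun k => (hG (c k)).eq_iInter_nat
  set V : ℕ → ℕ → Set ℝ := fun m k => ⋂ j ≤ m, U k j
  have hVo : ∀ m k, IsOpen (V m k) := fun m k =>
    (finite_Iic m).isOpen_biInter fun j _ => hUo k j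
  refine ⟨fun m => firstHit (V m) c (c 0) (m + 1),
    fun m => baireClass_one_firstHit (hVo m) _ _ _, fun x => ?_⟩
  have hex : ∃ n, c n = f x := by simpa [hc] using mem_range_self (f := f) x
  obtain ⟨n, hn, hmin⟩ : ∃ n, c n = f x ∧ ∀ k < n, c k ≠ f x :=
    ⟨_, Nat.find_spec hex, fun k hk => Nat.find_min hex hk⟩
  have hxn : ∀ m, x ∈ V m n := by
    have hx : x ∈ ⋂ j, U n j := hUe n ▸ hn.symm
    exact fun m => mem_iInter₂.2 fun j _ => mem_iInter.1 hx j
  have hxk : ∀ k < n, ∀ᶠ m in atTop, x ∉ V m k := fun k hk =>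
    eventually_notMem_biInter_le (hUe k ▸ fun h => hmin k hk h.symm)
  have hevent : ∀ᶠ m in atTop, firstHit (V m) c (c 0) (m + 1) x = f x := by
    filter_upwards [(finite_Iio n).eventually_all.2 hxk, eventually_ge_atTop n] with m hk hm
    rw [firstHit_eq c (c 0) (hxn m) hk (Nat.lt_succ_of_le hm), hn]
  exact tendsto_const_nhds.congr' (EventuallyEq.symm hevent)
end

section
/- If f : ℝ → ℝ has countable range and the preimage of every singleton is an F_σδ set, then f is of Baire class 3. -/
open MeasureTheory Filter Set Topology
/-- An `Fσ` set: a countable union of closed sets. -/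
def IsFsigma (s : Set ℝ) : Prop :=
  ∃ F : ℕ → Set ℝ, (∀ n, IsClosed (F n)) ∧ s = ⋃ n, F n

/-- An `Fσδ` set: a countable intersection of `Fσ` sets. -/
def IsFsigmaDelta (s : Set ℝ) : Prop :=
  ∃ T : ℕ → Set ℝ, (∀ n, IsFsigma (T n)) ∧ s = ⋂ n, T n

/-!
Enumerate the range of `f` as `c 0, c 1, …` and write each level set `f ⁻¹' {c k}` as a
decreasing intersection `⋂ n, T k n` of `Fσ` sets. Indicators of closed sets are Baire 1
(limits of thickened indicators), so indicators of `Fσ` sets are Baire 2 (increasing unions of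
closed sets). Let `g n x = c k` for the least `k ≤ n` with `x ∈ T k n`; this is a finite
algebraic combination of Baire-2 indicators. If `f x = c j` with `j` minimal, then `x ∈ T j n`
for all `n`, while for each `k < j` eventually `x ∉ T k n`, so `g n x = f x` for large `n`.
-/

section BaireClass

variable {X Y Z W : Type*} [TopologicalSpace X] [TopologicalSpace Y] [TopologicalSpace Z]
  [TopologicalSpace W]

theorem BaireClass.succ {n : ℕ} {f : X → Y} (hf : BaireClass n f) : BaireClass (n + 1) f :=
  ⟨fun _ => f, fun _ => hf, fun _ => tendsto_const_nhds⟩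

theorem BaireClass.const (n : ℕ) (y : Y) : BaireClass n (fun _ : X => y) := by
  induction n with
  | zero => exact continuous_const
  | succ n ih => exact ih.succ

theorem BaireClass.comp₂ (h : Y → Z → W) (hh : Continuous fun p : Y × Z => h p.1 p.2) :
    ∀ {n : ℕ} {f : X → Y} {g : X → Z}, BaireClass n f → BaireClass n g →
      BaireClass n (fun x => h (f x) (g x))
  | 0, _, _, hf, hg => hh.comp₂ hf hg
  | _ + 1, _, _, ⟨F, hF, hFf⟩, ⟨G, hG, hGg⟩ =>
    ⟨fun k x => h (F k x) (G k x), fun k => comp₂ h hh (hF k) (hG k),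
      fun x => (hh.tendsto _).comp ((hFf x).prodMk_nhds (hGg x))⟩

theorem BaireClass.add [Add Y] [ContinuousAdd Y] {n : ℕ} {f g : X → Y} (hf : BaireClass n f)
    (hg : BaireClass n g) : BaireClass n (f + g) :=
  comp₂ (· + ·) continuous_add hf hg

theorem BaireClass.mul [Mul Y] [ContinuousMul Y] {n : ℕ} {f g : X → Y} (hf : BaireClass n f)
    (hg : BaireClass n g) : BaireClass n (f * g) :=
  comp₂ (· * ·) continuous_mul hf hg

theorem BaireClass.sub [Sub Y] [ContinuousSub Y] {n : ℕ} {f g : X → Y} (hf : BaireClass n f)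
    (hg : BaireClass n g) : BaireClass n (f - g) :=
  comp₂ (· - ·) continuous_sub hf hg

theorem BaireClass.finset_sum {ι : Type*} [AddCommMonoid Y] [ContinuousAdd Y] {n : ℕ}
    (s : Finset ι) {F : ι → X → Y} (hF : ∀ i ∈ s, BaireClass n (F i)) :
    BaireClass n (∑ i ∈ s, F i) :=
  Finset.sum_induction F (BaireClass n) (fun _ _ => BaireClass.add) (BaireClass.const n 0) hF

end BaireClass

section Indicator

variable {X : Type*}

theorem BaireClass.indicator_sdiff [TopologicalSpace X] {n : ℕ} {s t : Set X}
    (ht : BaireClass n (t.indicator (1 : X → ℝ))) (hs : BaireClass n (s.indicator (1 : X → ℝ))) :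
    BaireClass n ((t \ s).indicator (1 : X → ℝ)) := by
  convert ht.mul ((BaireClass.const n 1).sub hs) using 1
  ext x
  by_cases hxt : x ∈ t <;> by_cases hxs : x ∈ s <;> simp [hxt, hxs]

theorem BaireClass.indicator_disjointed [TopologicalSpace X] {n : ℕ} {S : ℕ → Set X}
    (hS : ∀ k, BaireClass n ((S k).indicator (1 : X → ℝ))) (k : ℕ) :
    BaireClass n ((disjointed S k).indicator (1 : X → ℝ)) :=
  Nat.disjointedRec (p := fun t : Set X => BaireClass n (t.indicator (1 : X → ℝ)))
    (fun _ i ht => ht.indicator_sdiff (hS i)) (hS k)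

theorem baireClass_one_indicator_of_isClosed [PseudoEMetricSpace X] {C : Set X}
    (hC : IsClosed C) : BaireClass 1 (C.indicator (1 : X → ℝ)) := by
  have hδ : ∀ n : ℕ, (0 : ℝ) < 1 / (n + 1) := fun n => Nat.one_div_pos_of_nat
  refine ⟨fun n x => thickenedIndicator (hδ n) C x,
    fun n => NNReal.continuous_coe.comp (thickenedIndicator (hδ n) C).continuous, fun x => ?_⟩
  have := tendsto_pi_nhds.1
    (thickenedIndicator_tendsto_indicator_closure hδ tendsto_one_div_add_atTop_nhds_zero_nat C) x
  simpa [hC.closure_eq, NNReal.coe_indicator, Function.comp_def, Pi.one_def] using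
    (NNReal.continuous_coe.tendsto _).comp this

theorem baireClass_two_indicator_iUnion [PseudoEMetricSpace X] {F : ℕ → Set X}
    (hF : ∀ n, IsClosed (F n)) : BaireClass 2 ((⋃ n, F n).indicator (1 : X → ℝ)) := by
  refine ⟨fun n => (accumulate F n).indicator 1,
    fun n => baireClass_one_indicator_of_isClosed ?_, fun x => ?_⟩
  · exact (finite_le_nat n).isClosed_biUnion fun i _ => hF i
  · rw [← iUnion_accumulate]
    exact (monotone_accumulate.tendsto_indicator _ _ x).mono_right (pure_le_nhds _)

end Indicator

theorem IsFsigma.baireClass_two_indicator {s : Set ℝ} (hs : IsFsigma s) :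
    BaireClass 2 (s.indicator (1 : ℝ → ℝ)) := by
  obtain ⟨F, hF, rfl⟩ := hs
  exact baireClass_two_indicator_iUnion hF

theorem isFsigma_univ : IsFsigma univ :=
  ⟨fun _ => univ, fun _ => isClosed_univ, (iUnion_const univ).symm⟩

theorem IsFsigma.inter {s t : Set ℝ} (hs : IsFsigma s) (ht : IsFsigma t) : IsFsigma (s ∩ t) := by
  obtain ⟨F, hF, rfl⟩ := hs
  obtain ⟨G, hG, rfl⟩ := ht
  refine ⟨fun p => F p.unpair.1 ∩ G p.unpair.2, fun p => (hF _).inter (hG _), ?_⟩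
  rw [iUnion_inter_iUnion]
  exact ((Nat.surjective_unpair.iUnion_comp fun q => F q.1 ∩ G q.2).trans
    (iUnion_prod' fun q => F q.1 ∩ G q.2)).symm

theorem IsFsigmaDelta.exists_antitone {s : Set ℝ} (hs : IsFsigmaDelta s) :
    ∃ T : ℕ → Set ℝ, (∀ n, IsFsigma (T n)) ∧ Antitone T ∧ s = ⋂ n, T n := by
  obtain ⟨T, hT, rfl⟩ := hs
  refine ⟨fun n => (Finset.Iic n).inf T,
    fun n => Finset.inf_induction isFsigma_univ (fun _ h₁ _ h₂ => h₁.inter h₂) fun j _ => hT j,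
    fun m n hmn => Finset.inf_mono (Finset.Iic_subset_Iic.2 hmn), ?_⟩
  simp only [Finset.inf_set_eq_iInter, Finset.mem_Iic]
  ext x
  simp only [mem_iInter]
  exact ⟨fun h n j _ => h j, fun h j => h j j le_rfl⟩

section FirstHit

variable {X : Type*}

/-- The value `c k` at the least `k < n` with `x ∈ S k` (and `0` if there is none), written as a
sum so that its Baire class is visible. -/
noncomputable def firstHitValue (S : ℕ → Set X) (c : ℕ → ℝ) (n : ℕ) : X → ℝ :=
  ∑ k ∈ Finset.range n, fun x => c k * (disjointed S k).indicator 1 x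

theorem firstHitValue_apply {S : ℕ → Set X} {c : ℕ → ℝ} {n j : ℕ} {x : X} (hj : x ∈ S j)
    (hlt : ∀ k < j, x ∉ S k) (hjn : j < n) : firstHitValue S c n x = c j := by
  have hxj : x ∈ disjointed S j := by
    simpa [disjointed_eq_inter_compl, hj] using hlt
  rw [firstHitValue, Finset.sum_apply, Finset.sum_eq_single_of_mem j (Finset.mem_range.2 hjn)]
  · simp [indicator_of_mem hxj]
  · intro k _ hkj
    have hxk : x ∉ disjointed S k := fun hxk =>
      Set.disjoint_left.1 (disjoint_disjointed S hkj) hxk hxj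
    simp [indicator_of_notMem hxk]

theorem baireClass_firstHitValue [TopologicalSpace X] {m : ℕ} {S : ℕ → Set X}
    (hS : ∀ k, BaireClass m ((S k).indicator (1 : X → ℝ))) (c : ℕ → ℝ) (n : ℕ) :
    BaireClass m (firstHitValue S c n) :=
  BaireClass.finset_sum _ fun k _ =>
    (BaireClass.const m (c k)).mul (BaireClass.indicator_disjointed hS k)

theorem tendsto_firstHitValue {S : ℕ → ℕ → Set X} {c : ℕ → ℝ} {x : X} {j : ℕ}
    (hj : ∀ n, x ∈ S n j) (hlt : ∀ k < j, ∀ᶠ n in atTop, x ∉ S n k) :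
    Tendsto (fun n => firstHitValue (S n) c (n + 1) x) atTop (𝓝 (c j)) := by
  have hlt' : ∀ᶠ n in atTop, ∀ k < j, x ∉ S n k :=
    (eventually_all_finite (finite_lt_nat j)).2 hlt
  refine tendsto_const_nhds.congr' ?_
  filter_upwards [hlt', eventually_ge_atTop j] with n hn hjn
  exact (firstHitValue_apply (hj n) hn (Nat.lt_succ_of_le hjn)).symm

end FirstHit

/-- A real function with countable range whose point preimages are all `Fσδ`
sets is of Baire class 3. -/
theorem baireThree_of_countable_range_fsigmadelta (f : ℝ → ℝ)
    (hr : (Set.range f).Countable)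
    (hF : ∀ c : ℝ, IsFsigmaDelta (f ⁻¹' {c})) :
    BaireClass 3 f := by
  classical
  obtain ⟨c, hc⟩ := hr.exists_eq_range ⟨f 0, mem_range_self 0⟩
  choose T hTσ hT_anti hT using fun k => (hF (c k)).exists_antitone
  refine ⟨fun n => firstHitValue (fun k => T k n) c (n + 1),
    fun n => baireClass_firstHitValue (fun k => (hTσ k n).baireClass_two_indicator) c _,
    fun x => ?_⟩
  have hex : ∃ j, f x = c j := by
    obtain ⟨j, hj⟩ : f x ∈ range c := hc ▸ mem_range_self x
    exact ⟨j, hj.symm⟩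
  have hmem : ∀ k, f x = c k ↔ ∀ n, x ∈ T k n := fun k => by
    simpa using Set.ext_iff.1 (hT k) x
  rw [Nat.find_spec hex]
  refine tendsto_firstHitValue ((hmem _).1 (Nat.find_spec hex)) fun k hk => ?_
  obtain ⟨m, hm⟩ := not_forall.1 (mt (hmem k).2 (Nat.find_min hex hk))
  filter_upwards [eventually_ge_atTop m] with n hn hxn
  exact hm (hT_anti k hn hxn)
end

section
/- Let E ⊆ ℝ² be compact, ε > 0, and for each n define A_n^ε = {(x,y) ∈ E : λ(E_x ∩ I) ≥ (1−ε)λ(I) for every closed nondegenerate interval I with y ∈ I and |I| < 1/n}. Then A_n^ε is a closed subset of ℝ². -/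
open MeasureTheory Filter Set Topology

/-!
The sections `x ↦ E_x` of a compact set are upper hemicontinuous, so by outer regularity of
Lebesgue measure `x ↦ λ(E_x ∩ I)` is upper semicontinuous and each inequality
`(1 - ε)|I| ≤ λ(E_x ∩ I)` cuts out a closed set of `x`. What remains is that `y ∈ I` is a closed
rather than an open condition on `y`; but since widening `I` by `δ` changes `λ(E_x ∩ I)` by at most
`2δ`, it suffices to test intervals containing `y` in their interior, and then `Aₙ^ε` is `E`
intersected with closed sets.
-/

section Sections

variable {X Y : Type*} [TopologicalSpace X] [TopologicalSpace Y]

theorem IsCompact.upperHemicontinuous_sections [T2Space X] {E : Set (X × Y)} (hE : IsCompact E) :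
    UpperHemicontinuous fun x => {y | (x, y) ∈ E} := by
  refine upperHemicontinuous_iff_isOpen_preimage_Iic.2 fun U hU => ?_
  have hK : IsCompact (E ∩ Prod.snd ⁻¹' Uᶜ) :=
    hE.inter_right (hU.isClosed_compl.preimage continuous_snd)
  convert (hK.image continuous_fst).isClosed.isOpen_compl using 1
  ext x
  simp [subset_def]

theorem UpperHemicontinuous.upperSemicontinuous_measure [MeasurableSpace Y] (μ : Measure Y)
    [μ.OuterRegular] {f : X → Set Y} (hf : UpperHemicontinuous f) :
    UpperSemicontinuous fun x => μ (f x) := by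
  intro x r hr
  obtain ⟨U, hfU, hU, hμU⟩ := Set.exists_isOpen_lt_of_lt _ r hr
  filter_upwards [hf.forall_isOpen x U hU hfU] with x' hx'
  exact (measure_mono hx').trans_lt hμU

end Sections

theorem volume_inter_Icc_sub_add_le (S : Set ℝ) (a b : ℝ) {δ : ℝ} (hδ : 0 ≤ δ) :
    volume (S ∩ Icc (a - δ) (b + δ)) ≤ volume (S ∩ Icc a b) + ENNReal.ofReal (2 * δ) := by
  have hsub :
      S ∩ Icc (a - δ) (b + δ) ⊆ (S ∩ Icc a b) ∪ (Icc (a - δ) a ∪ Icc b (b + δ)) := by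
    rintro y ⟨hyS, hy₁, hy₂⟩
    by_cases hya : a ≤ y
    · by_cases hyb : y ≤ b
      · exact Or.inl ⟨hyS, hya, hyb⟩
      · exact Or.inr (Or.inr ⟨(not_le.1 hyb).le, hy₂⟩)
    · exact Or.inr (Or.inl ⟨hy₁, (not_le.1 hya).le⟩)
  calc volume (S ∩ Icc (a - δ) (b + δ))
      ≤ volume (S ∩ Icc a b) + (volume (Icc (a - δ) a) + volume (Icc b (b + δ))) :=
        (measure_mono hsub).trans <| (measure_union_le _ _).trans <| by
          gcongr; exact measure_union_le _ _
    _ = volume (S ∩ Icc a b) + ENNReal.ofReal (2 * δ) := by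
        rw [Real.volume_Icc, Real.volume_Icc, sub_sub_cancel, add_sub_cancel_left,
          ← ENNReal.ofReal_add hδ hδ, two_mul]

theorem le_volume_inter_Icc_of_forall_Ioo {S : Set ℝ} {y c L : ℝ}
    (h : ∀ a b, a < y → y < b → b - a < L →
      ENNReal.ofReal (c * (b - a)) ≤ volume (S ∩ Icc a b))
    {a b : ℝ} (ha : a ≤ y) (hb : y ≤ b) (hL : b - a < L) :
    ENNReal.ofReal (c * (b - a)) ≤ volume (S ∩ Icc a b) := by
  have hlim : Tendsto (fun δ => ENNReal.ofReal (c * (b + δ - (a - δ)))) (𝓝[>] 0)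
      (𝓝 (ENNReal.ofReal (c * (b - a)))) := by
    refine (ENNReal.continuous_ofReal.tendsto _).comp ?_ |>.mono_left nhdsWithin_le_nhds
    convert (by fun_prop : Continuous fun δ : ℝ => c * (b + δ - (a - δ))).tendsto 0 using 2
    ring
  have hlim' : Tendsto (fun δ => volume (S ∩ Icc a b) + ENNReal.ofReal (2 * δ)) (𝓝[>] 0)
      (𝓝 (volume (S ∩ Icc a b))) := by
    have h2δ : Tendsto (fun δ : ℝ => ENNReal.ofReal (2 * δ)) (𝓝 0) (𝓝 0) := by
      rw [show (0 : ENNReal) = ENNReal.ofReal (2 * 0) by simp]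
      exact (ENNReal.continuous_ofReal.comp (continuous_const_mul 2)).tendsto 0
    simpa using (tendsto_const_nhds.add h2δ).mono_left nhdsWithin_le_nhds
  have hsmall : ∀ᶠ δ in 𝓝[>] (0 : ℝ), δ < (L - (b - a)) / 2 :=
    nhdsWithin_le_nhds (gt_mem_nhds (by linarith))
  refine le_of_tendsto_of_tendsto hlim hlim' ?_
  filter_upwards [hsmall, self_mem_nhdsWithin] with δ hδL (hδ : 0 < δ)
  exact (h _ _ (by linarith) (by linarith) (by linarith)).trans
    (volume_inter_Icc_sub_add_le S a b hδ.le)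

theorem isClosed_A_n_eps_general (E : Set (ℝ × ℝ)) (hE : IsCompact E)
    (ε : ℝ) (n : ℕ) :
    IsClosed {p : ℝ × ℝ | p ∈ E ∧ ∀ a b : ℝ, a ≤ p.2 → p.2 ≤ b → a < b →
      b - a < 1 / (n : ℝ) →
      ENNReal.ofReal ((1 - ε) * (b - a)) ≤
        volume ({y : ℝ | (p.1, y) ∈ E} ∩ Icc a b)} := by
  have hsections (a b : ℝ) :
      UpperSemicontinuous fun x => volume ({y | (x, y) ∈ E} ∩ Icc a b) :=
    (hE.inter_right (isClosed_Icc.preimage continuous_snd)).upperHemicontinuous_sections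
      |>.upperSemicontinuous_measure volume
  have hclosed : IsClosed (E ∩ ⋂ (a : ℝ) (b : ℝ) (_ : b - a < 1 / (n : ℝ)),
      ({p | p.2 ∈ Ioo a b}ᶜ ∪ Prod.fst ⁻¹' ((fun x => volume ({y | (x, y) ∈ E} ∩ Icc a b)) ⁻¹'
        Ici (ENNReal.ofReal ((1 - ε) * (b - a)))))) :=
    hE.isClosed.inter <| isClosed_iInter fun a => isClosed_iInter fun b => isClosed_iInter fun _ =>
      (isOpen_Ioo.preimage continuous_snd).isClosed_compl.union
        (((hsections a b).isClosed_preimage _).preimage continuous_fst)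
  convert hclosed using 1
  ext p
  simp only [mem_ofPred_eq, mem_inter_iff, mem_iInter, mem_union, mem_compl_iff, mem_Ioo,
    mem_preimage, mem_Ici, ← imp_iff_not_or, and_imp]
  exact and_congr_right fun _ => ⟨fun h a b hL ha hb => h a b ha.le hb.le (ha.trans hb) hL,
    fun h a b ha hb _ hL =>
      le_volume_inter_Icc_of_forall_Ioo (fun a b ha hb hL => h a b hL ha hb) ha hb hL⟩

/-- For compact `E ⊆ ℝ²`, the set `Aₙ^ε` of points `(x,y) ∈ E` such that
`λ(E_x ∩ I) ≥ (1-ε) λ(I)` for every closed nondegenerate interval `I ∋ y`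
of length `< 1/n` is closed. -/
theorem isClosed_A_n_eps (E : Set (ℝ × ℝ)) (hE : IsCompact E)
    (ε : ℝ) (hε : 0 < ε) (n : ℕ) (hn : 0 < n) :
    IsClosed {p : ℝ × ℝ | p ∈ E ∧ ∀ a b : ℝ, a ≤ p.2 → p.2 ≤ b → a < b →
      b - a < 1 / (n : ℝ) →
      ENNReal.ofReal ((1 - ε) * (b - a)) ≤
        volume ({y : ℝ | (p.1, y) ∈ E} ∩ Icc a b)} :=
  isClosed_A_n_eps_general E hE ε n
end

section
/- Let g : ℝ² → ℝ be Lebesgue measurable. Then there exists a set B ⊆ ℝ² of planar measure zero such that for every (x,y) ∉ B, the function g_x : y' ↦ g(x,y') is approximately continuous at y. -/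
open MeasureTheory Filter Set Topology

/-- `S` has Lebesgue density one at `y`. -/
def HasDensityOne (S : Set ℝ) (y : ℝ) : Prop :=
  Tendsto (fun h : ℝ => volume (S ∩ Icc (y - h) (y + h)) / ENNReal.ofReal (2 * h))
    (𝓝[>] 0) (𝓝 1)

/-- `f` is approximately continuous: the preimage of every open set is Lebesgue
measurable and has density one at each of its points (i.e. it is open in the
density topology). -/
def ApproxContinuous (f : ℝ → ℝ) : Prop :=
  ∀ U : Set ℝ, IsOpen U →
    NullMeasurableSet (f ⁻¹' U) volume ∧ ∀ y ∈ f ⁻¹' U, HasDensityOne (f ⁻¹' U) y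

/-- `f` is approximately continuous at the point `y`. -/
def ApproxContinuousAt (f : ℝ → ℝ) (y : ℝ) : Prop :=
  ∀ U : Set ℝ, IsOpen U → f y ∈ U →
    NullMeasurableSet (f ⁻¹' U) volume ∧ HasDensityOne (f ⁻¹' U) y


/-!
For `V` in a countable basis of `ℝ`, the Lebesgue density theorem applied to every vertical
section of `g⁻¹(V)`, combined with Fubini, shows that almost every point of `g⁻¹(V)` is a density
point of its section. Fubini needs the exceptional set to be measurable, so density is first
tested along the radii `1 / (n + 1)`, a countable condition; as consecutive radii have ratio
tending to `1`, monotonicity of `h ↦ |S ∩ [y - h, y + h]|` upgrades this to density along all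
radii. A measurable modification of `g` agrees with it on almost every section up to a null set,
which approximate continuity does not see.
-/

open scoped ENNReal

noncomputable def densityRatio (S : Set ℝ) (y h : ℝ) : ℝ≥0∞ :=
  volume (S ∩ Icc (y - h) (y + h)) / ENNReal.ofReal (2 * h)

theorem hasDensityOne_iff_tendsto_densityRatio {S : Set ℝ} {y : ℝ} :
    HasDensityOne S y ↔ Tendsto (densityRatio S y) (𝓝[>] 0) (𝓝 1) :=
  Iff.rfl

theorem densityRatio_le_one (S : Set ℝ) (y h : ℝ) : densityRatio S y h ≤ 1 := by
  refine ENNReal.div_le_of_le_mul ?_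
  calc volume (S ∩ Icc (y - h) (y + h)) ≤ volume (Icc (y - h) (y + h)) :=
        measure_mono inter_subset_right
    _ = 1 * ENNReal.ofReal (2 * h) := by rw [Real.volume_Icc, one_mul]; ring_nf

theorem densityRatio_mul_le (S : Set ℝ) (y : ℝ) {r h : ℝ} (hr : 0 < r) (hrh : r ≤ h) :
    densityRatio S y r * ENNReal.ofReal (r / h) ≤ densityRatio S y h := by
  have h2r : ENNReal.ofReal (2 * r) ≠ 0 := by simp [hr]
  have hscale : ENNReal.ofReal (r / h) = ENNReal.ofReal (2 * r) / ENNReal.ofReal (2 * h) := by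
    rw [← ENNReal.ofReal_div_of_pos (by linarith), mul_div_mul_left _ _ two_ne_zero]
  calc densityRatio S y r * ENNReal.ofReal (r / h)
      = volume (S ∩ Icc (y - r) (y + r)) / ENNReal.ofReal (2 * h) := by
        rw [densityRatio, hscale, ← mul_div_assoc, ENNReal.div_mul_cancel h2r ENNReal.ofReal_ne_top]
    _ ≤ densityRatio S y h :=
        ENNReal.div_le_div_right (measure_mono (inter_subset_inter_right _
          (Icc_subset_Icc (by linarith) (by linarith)))) _

theorem HasDensityOne.of_tendsto_densityRatio_nat {S : Set ℝ} {y : ℝ}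
    (hseq : Tendsto (fun n : ℕ => densityRatio S y (1 / ((n : ℝ) + 1))) atTop (𝓝 1)) :
    HasDensityOne S y := by
  have hlower : Tendsto (fun n : ℕ =>
      densityRatio S y (1 / ((n : ℝ) + 1)) * ENNReal.ofReal (n / (n + 1))) atTop (𝓝 1) := by
    simpa using ENNReal.Tendsto.mul hseq (Or.inr ENNReal.one_ne_top)
      (by simpa using ENNReal.tendsto_ofReal (tendsto_natCast_div_add_atTop (1 : ℝ)))
      (Or.inr ENNReal.one_ne_top)
  have hfloor : Tendsto (fun h : ℝ => ⌊h⁻¹⌋₊) (𝓝[>] 0) atTop :=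
    tendsto_nat_floor_atTop.comp tendsto_inv_nhdsGT_zero
  refine tendsto_of_tendsto_of_tendsto_of_le_of_le' (hlower.comp hfloor) tendsto_const_nhds ?_
    (Eventually.of_forall (densityRatio_le_one S y))
  filter_upwards [self_mem_nhdsWithin] with h (hh : 0 < h)
  set n := ⌊h⁻¹⌋₊
  have hnh : (n : ℝ) * h ≤ 1 := by
    simpa [hh.ne'] using mul_le_mul_of_nonneg_right (Nat.floor_le (inv_nonneg.2 hh.le)) hh.le
  have hnh' : 1 < ((n : ℝ) + 1) * h := by
    simpa [hh.ne'] using mul_lt_mul_of_pos_right (Nat.lt_floor_add_one h⁻¹) hh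
  have hr : 1 / ((n : ℝ) + 1) ≤ h := by
    rw [div_le_iff₀ (by positivity)]
    linarith
  have hscale : (n : ℝ) / (n + 1) ≤ 1 / ((n : ℝ) + 1) / h := by
    rw [div_div, div_le_div_iff₀ (by positivity) (by positivity)]
    nlinarith
  calc densityRatio S y (1 / ((n : ℝ) + 1)) * ENNReal.ofReal (n / (n + 1))
      ≤ densityRatio S y (1 / ((n : ℝ) + 1)) * ENNReal.ofReal (1 / ((n : ℝ) + 1) / h) := by
        gcongr
    _ ≤ densityRatio S y h := densityRatio_mul_le S y (by positivity) hr

theorem HasDensityOne.mono_ae {S T : Set ℝ} {y : ℝ} (hS : HasDensityOne S y)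
    (hST : S ≤ᵐ[volume] T) : HasDensityOne T y :=
  tendsto_of_tendsto_of_tendsto_of_le_of_le hS tendsto_const_nhds
    (fun _ => ENNReal.div_le_div_right (measure_mono_ae (hST.inter EventuallyLE.rfl)) _)
    (densityRatio_le_one T y)

theorem ae_hasDensityOne {S : Set ℝ} (hS : MeasurableSet S) :
    ∀ᵐ y, y ∈ S → HasDensityOne S y := by
  filter_upwards [Besicovitch.ae_tendsto_measure_inter_div_of_measurableSet volume hS]
    with y hy hyS
  have hball : ∀ h, volume (S ∩ Metric.closedBall y h) / volume (Metric.closedBall y h) =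
      densityRatio S y h := by
    intro h
    rw [Real.closedBall_eq_Icc, Real.volume_Icc, densityRatio]
    ring_nf
  rw [indicator_of_mem hyS, Pi.one_apply] at hy
  rw [hasDensityOne_iff_tendsto_densityRatio]
  simpa only [hball] using hy

theorem ApproxContinuousAt.congr_ae {f f' : ℝ → ℝ} {y : ℝ} (hf : ApproxContinuousAt f y)
    (hff' : f =ᵐ[volume] f') (hy : f y = f' y) : ApproxContinuousAt f' y := by
  intro U hU hyU
  obtain ⟨hmeas, hdens⟩ := hf U hU (hy ▸ hyU)
  have hpre : f ⁻¹' U =ᵐ[volume] f' ⁻¹' U := hff'.preimage U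
  exact ⟨hmeas.congr hpre, hdens.mono_ae hpre.le⟩

section Sections

open TopologicalSpace

variable {α : Type*} [MeasurableSpace α]

theorem measurable_densityRatio_section {A : Set (α × ℝ)} (hA : MeasurableSet A) (h : ℝ) :
    Measurable fun p : α × ℝ => densityRatio (Prod.mk p.1 ⁻¹' A) p.2 h := by
  set s : Set ((α × ℝ) × ℝ) :=
    {q | (q.1.1, q.2) ∈ A ∧ q.1.2 - h ≤ q.2 ∧ q.2 ≤ q.1.2 + h}
  have hs : MeasurableSet s :=
    (hA.preimage (measurable_fst.fst.prodMk measurable_snd)).inter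
      ((measurableSet_le (measurable_fst.snd.sub measurable_const) measurable_snd).inter
        (measurableSet_le measurable_snd (measurable_fst.snd.add measurable_const)))
  have hsec : ∀ p : α × ℝ, Prod.mk p ⁻¹' s = Prod.mk p.1 ⁻¹' A ∩ Icc (p.2 - h) (p.2 + h) :=
    fun p => rfl
  simp only [densityRatio, ← hsec]
  exact (measurable_measure_prodMk_left hs).div_const _

theorem ae_hasDensityOne_section (μ : Measure α) {A : Set (α × ℝ)} (hA : MeasurableSet A) :
    ∀ᵐ p ∂μ.prod volume, p ∈ A → HasDensityOne (Prod.mk p.1 ⁻¹' A) p.2 := by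
  have hradii : Tendsto (fun n : ℕ => 1 / ((n : ℝ) + 1)) atTop (𝓝[>] 0) :=
    tendsto_nhdsWithin_iff.2
      ⟨tendsto_one_div_add_atTop_nhds_zero_nat,
        Eventually.of_forall fun n => mem_Ioi.2 (by positivity)⟩
  have hmeas : MeasurableSet {p : α × ℝ | p ∈ A →
      Tendsto (fun n : ℕ => densityRatio (Prod.mk p.1 ⁻¹' A) p.2 (1 / ((n : ℝ) + 1))) atTop
        (𝓝 1)} :=
    hA.imp (measurableSet_tendsto _ fun n => measurable_densityRatio_section hA _)
  have hseq := (Measure.ae_prod_iff_ae_ae (μ := μ) (ν := volume) hmeas).2 <|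
    Eventually.of_forall fun x => by
      filter_upwards [ae_hasDensityOne (measurable_prodMk_left hA)] with y hy hxy
      exact (hy hxy).comp hradii
  filter_upwards [hseq] with p hp hpA
  exact .of_tendsto_densityRatio_nat (hp hpA)

theorem ae_approxContinuousAt_section (μ : Measure α) {g : α × ℝ → ℝ} (hg : Measurable g) :
    ∀ᵐ p ∂μ.prod volume, ApproxContinuousAt (fun y => g (p.1, y)) p.2 := by
  have hbasis := (ae_ball_iff (countable_countableBasis ℝ)).2 fun V hV =>
    ae_hasDensityOne_section μ (hg (isOpen_of_mem_countableBasis hV).measurableSet)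
  filter_upwards [hbasis] with p hp U hU hpU
  obtain ⟨V, hV, hpV, hVU⟩ :=
    (isBasis_countableBasis ℝ).exists_subset_of_mem_open hpU hU
  exact ⟨(hg.comp measurable_prodMk_left hU.measurableSet).nullMeasurableSet,
    (hp V hV hpV).mono_ae (Eventually.of_forall fun y hy => hVU hy)⟩

theorem ae_approxContinuousAt_section_of_aemeasurable (μ : Measure α) {g : α × ℝ → ℝ}
    (hg : AEMeasurable g (μ.prod volume)) :
    ∀ᵐ p ∂μ.prod volume, ApproxContinuousAt (fun y => g (p.1, y)) p.2 := by
  have hsections : ∀ᵐ p : α × ℝ ∂μ.prod volume,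
      (fun y => hg.mk g (p.1, y)) =ᵐ[volume] fun y => g (p.1, y) :=
    Measure.quasiMeasurePreserving_fst.ae (Measure.ae_ae_of_ae_prod hg.ae_eq_mk.symm)
  filter_upwards [ae_approxContinuousAt_section μ hg.measurable_mk, hg.ae_eq_mk, hsections]
    with p hp hgp hsec
  exact hp.congr_ae hsec hgp.symm

end Sections

/-- If `g : ℝ² → ℝ` is Lebesgue measurable then off a planar null set `B`
every vertical section `g_x` is approximately continuous at `y`. -/
theorem approx_continuous_sections_ae (g : ℝ × ℝ → ℝ)
    (hg : AEMeasurable g (volume : Measure (ℝ × ℝ))) :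
    ∃ B : Set (ℝ × ℝ), volume B = 0 ∧
      ∀ p : ℝ × ℝ, p ∉ B → ApproxContinuousAt (fun y => g (p.1, y)) p.2 := by
  rw [Measure.volume_eq_prod] at hg
  have hae := ae_approxContinuousAt_section_of_aemeasurable volume hg
  rw [← Measure.volume_eq_prod] at hae
  exact ⟨_, ae_iff.1 hae, fun p hp => not_not.1 hp⟩
end
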